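/- arXiv:2402.04621 — 2 statements merged into one kernel-verified Lean document; each statement's English description precedes it below -/
import Mathlib

section
/- Scale-invariance at the graph level: for every finite simple graph G without isolated nodes, with node features X and class labels Y, and for every real scalar c ≠ 0, the normalized graph-level CFH computed with the scaled features cX equals the one computed with X, i.e., h̃^(G)(cX) = h̃^(G)(X). -/
open Finset

/-- The class-controlled feature `(X_i | Y)` of node `i`: its feature minus the mean
feature of the nodes of its class. -/
noncomputable def ccf {V : Type*} [Fintype V] [DecidableEq V] {k c : ℕ}
    (X : V → EuclideanSpace ℝ (Fin k)) (Y : V → Fin c) (i : V) :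
    EuclideanSpace ℝ (Fin k) :=
  X i - ((Finset.univ.filter fun j => Y j = Y i).card : ℝ)⁻¹ •
    ∑ j ∈ Finset.univ.filter fun j => Y j = Y i, X j

/-- `d(v_i, V')`: mean Euclidean distance between the class-controlled feature of `i`
and those of the nodes in `S`. -/
noncomputable def dFun {V : Type*} [Fintype V] [DecidableEq V] {k c : ℕ}
    (X : V → EuclideanSpace ℝ (Fin k)) (Y : V → Fin c) (i : V) (S : Finset V) : ℝ :=
  (S.card : ℝ)⁻¹ * ∑ j ∈ S, ‖ccf X Y i - ccf X Y j‖

/-- The homophily baseline `b(v_i) = d(v_i, V \ {v_i})`. -/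
noncomputable def bFun {V : Type*} [Fintype V] [DecidableEq V] {k c : ℕ}
    (X : V → EuclideanSpace ℝ (Fin k)) (Y : V → Fin c) (i : V) : ℝ :=
  dFun X Y i (Finset.univ.erase i)

open scoped Classical in
/-- The neighbor finset `N_i` of node `i` in the graph `G`. -/
noncomputable def nbr {V : Type*} [Fintype V] (G : SimpleGraph V) (i : V) : Finset V :=
  Finset.univ.filter fun j => G.Adj i j

/-- `d(v_i, N_i)`: mean distance from `i` to its neighbors. -/
noncomputable def dN {V : Type*} [Fintype V] [DecidableEq V] {k c : ℕ}
    (G : SimpleGraph V) (X : V → EuclideanSpace ℝ (Fin k)) (Y : V → Fin c) (i : V) : ℝ :=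
  dFun X Y i (nbr G i)

/-- Unnormalized node-level CFH `h^(v)_i = b(v_i) - d(v_i, N_i)`. -/
noncomputable def hv {V : Type*} [Fintype V] [DecidableEq V] {k c : ℕ}
    (G : SimpleGraph V) (X : V → EuclideanSpace ℝ (Fin k)) (Y : V → Fin c) (i : V) : ℝ :=
  bFun X Y i - dN G X Y i

/-- Normalized node-level CFH `h̃^(v)_i = h^(v)_i / max(b(v_i), d(v_i, N_i))`
(equal to `0` when the denominator vanishes, by the convention `x / 0 = 0`). -/
noncomputable def hvNorm {V : Type*} [Fintype V] [DecidableEq V] {k c : ℕ}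
    (G : SimpleGraph V) (X : V → EuclideanSpace ℝ (Fin k)) (Y : V → Fin c) (i : V) : ℝ :=
  hv G X Y i / max (bFun X Y i) (dN G X Y i)

/-- Unnormalized graph-level CFH `h^(G)`, the mean of the node-level CFH values. -/
noncomputable def hG {V : Type*} [Fintype V] [DecidableEq V] {k c : ℕ}
    (G : SimpleGraph V) (X : V → EuclideanSpace ℝ (Fin k)) (Y : V → Fin c) : ℝ :=
  (Fintype.card V : ℝ)⁻¹ * ∑ i, hv G X Y i

/-- Normalized graph-level CFH
`h̃^(G) = h^(G) / ((1/|V|) max(Σ_i b(v_i), Σ_i d(v_i, N_i)))`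
(equal to `0` when the denominator vanishes, by the convention `x / 0 = 0`). -/
noncomputable def hGNorm {V : Type*} [Fintype V] [DecidableEq V] {k c : ℕ}
    (G : SimpleGraph V) (X : V → EuclideanSpace ℝ (Fin k)) (Y : V → Fin c) : ℝ :=
  hG G X Y /
    ((Fintype.card V : ℝ)⁻¹ * max (∑ i, bFun X Y i) (∑ i, dN G X Y i))

/-! Rescaling the features by `r` rescales every class-controlled feature by `r`, hence every
distance `d(v_i, V')` by `|r|`. Numerator and denominator of `h̃^(G)` are then both multiplied
by `|r| ≠ 0`. -/

section ScaleFeatures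

variable {V : Type*} [Fintype V] [DecidableEq V] {k c : ℕ}
  (G : SimpleGraph V) (X : V → EuclideanSpace ℝ (Fin k)) (Y : V → Fin c) (r : ℝ)

lemma ccf_smul (i : V) : ccf (fun j => r • X j) Y i = r • ccf X Y i := by
  simp only [ccf, ← smul_sum, smul_sub, smul_comm r]

lemma dFun_smul (i : V) (S : Finset V) :
    dFun (fun j => r • X j) Y i S = |r| * dFun X Y i S := by
  simp only [dFun, ccf_smul, ← smul_sub, norm_smul, Real.norm_eq_abs, ← mul_sum]
  ring

lemma bFun_smul (i : V) : bFun (fun j => r • X j) Y i = |r| * bFun X Y i :=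
  dFun_smul ..

lemma dN_smul (i : V) : dN G (fun j => r • X j) Y i = |r| * dN G X Y i :=
  dFun_smul ..

lemma hG_smul : hG G (fun j => r • X j) Y = |r| * hG G X Y := by
  simp only [hG, hv, bFun_smul, dN_smul, ← mul_sub, ← mul_sum]
  ring

end ScaleFeatures

theorem graph_level_CFH_scale_invariant_general {V : Type*} [Fintype V] [DecidableEq V] {k c : ℕ}
    (G : SimpleGraph V) (X : V → EuclideanSpace ℝ (Fin k)) (Y : V → Fin c)
    (r : ℝ) (hr : r ≠ 0) :
    hGNorm G (fun j => r • X j) Y = hGNorm G X Y := by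
  simp only [hGNorm, hG_smul, bFun_smul, dN_smul, ← mul_sum]
  rw [← mul_max_of_nonneg _ _ (abs_nonneg r), mul_left_comm,
    mul_div_mul_left _ _ (abs_ne_zero.mpr hr)]

/-- Lemma 3.2, graph level. The normalized graph-level CFH is invariant
under rescaling all node features by a nonzero real scalar. -/
theorem graph_level_CFH_scale_invariant {V : Type*} [Fintype V] [DecidableEq V] {k c : ℕ}
    (G : SimpleGraph V) (X : V → EuclideanSpace ℝ (Fin k)) (Y : V → Fin c)
    (hNoIso : ∀ v : V, (nbr G v).Nonempty) (r : ℝ) (hr : r ≠ 0) :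
    hGNorm G (fun j => r • X j) Y = hGNorm G X Y :=
  graph_level_CFH_scale_invariant_general G X Y r hr
end

section
/- Sign of the expected neighbor feature: for all a, τ ∈ ℝ, the quantity F(a, τ) has the same sign as a·τ; that is, F(a, τ) > 0 if aτ > 0, F(a, τ) < 0 if aτ < 0, and F(a, τ) = 0 if aτ = 0. -/
open MeasureTheory

/-- The standard Gaussian density `φ(x) = (1/√(2π)) e^{-x²/2}`. -/
noncomputable def phi (x : ℝ) : ℝ :=
  (Real.sqrt (2 * Real.pi))⁻¹ * Real.exp (-x ^ 2 / 2)

/-- The Gauss error function `erf(z) = (2/√π) ∫₀^z e^{-t²} dt`. -/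
noncomputable def erf (z : ℝ) : ℝ :=
  (2 / Real.sqrt Real.pi) * ∫ t in (0 : ℝ)..z, Real.exp (-t ^ 2)

/-- The complementary error function `erfc(z) = 1 - erf(z)`. -/
noncomputable def erfc (z : ℝ) : ℝ := 1 - erf z

/-- The expected class-controlled feature `F(a, τ)` of a sampled neighbor of a node with
class-controlled feature `a` in the asymptotic CSBM-X model with A-X dependence strength
`τ`:
`F(a,τ) = τ (erfc((τ-a)/√2) - e^{2τa} erfc((τ+a)/√2)) / (erfc((τ-a)/√2) + e^{2τa} erfc((τ+a)/√2))`. -/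
noncomputable def F (a τ : ℝ) : ℝ :=
  τ * (erfc ((τ - a) / Real.sqrt 2) -
        Real.exp (2 * τ * a) * erfc ((τ + a) / Real.sqrt 2)) /
    (erfc ((τ - a) / Real.sqrt 2) +
      Real.exp (2 * τ * a) * erfc ((τ + a) / Real.sqrt 2))

/-!
With `u = (τ - a)/√2` and `v = (τ + a)/√2` one has `v² - u² = 2τa`, so dividing numerator and
denominator of `F` by `e^{-u²}` gives `F(a, τ) = τ (erfcx u - erfcx v) / (erfcx u + erfcx v)`, where
`erfcx z = e^{z²} erfc z > 0`. As `v - u = √2 a`, everything reduces to `erfcx` being strictly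
decreasing. Its derivative `2 z erfcx z - 2/√π` is negative: trivially for `z ≤ 0`, and for `z > 0`
by the Mills-ratio bound `∫_z^∞ e^{-t²} dt < e^{-z²}/(2z)`, which follows from
`e^{-t²} < (t/z) e^{-t²}` on `(z, ∞)`.
-/

open Real Set Filter Topology

lemma setIntegral_Ioi_pos {f : ℝ → ℝ} {z : ℝ} (hf : ∀ t > z, 0 < f t)
    (hint : IntegrableOn f (Ioi z)) : 0 < ∫ t in Ioi z, f t := by
  rw [setIntegral_pos_iff_support_of_nonneg_ae
    (ae_restrict_of_forall_mem measurableSet_Ioi fun t ht => (hf t ht).le) hint]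
  have hsupp : Function.support f ∩ Ioi z = Ioi z := inter_eq_right.2 fun t ht => (hf t ht).ne'
  simp [hsupp]

lemma integrable_exp_neg_sq : Integrable fun t : ℝ => exp (-t ^ 2) := by
  simpa using integrable_exp_neg_mul_sq one_pos

lemma integrable_mul_exp_neg_sq : Integrable fun t : ℝ => t * exp (-t ^ 2) := by
  simpa using integrable_mul_exp_neg_mul_sq one_pos

lemma integral_Ioi_mul_exp_neg_sq (z : ℝ) :
    ∫ t in Ioi z, t * exp (-t ^ 2) = exp (-z ^ 2) / 2 := by
  have hderiv : ∀ t ∈ Ici z,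
      HasDerivAt (fun t => -exp (-t ^ 2) / 2) (t * exp (-t ^ 2)) t := fun t _ => by
    refine ((hasDerivAt_pow 2 t).fun_neg.exp.fun_neg.div_const 2).congr_deriv ?_
    push_cast
    ring
  have hlim : Tendsto (fun t : ℝ => -exp (-t ^ 2) / 2) atTop (𝓝 0) := by
    simpa using ((tendsto_exp_neg_atTop_nhds_zero.comp
      (tendsto_pow_atTop two_ne_zero)).neg.div_const 2)
  rw [integral_Ioi_of_hasDerivAt_of_tendsto' hderiv integrable_mul_exp_neg_sq.integrableOn hlim]
  ring

lemma integral_Ioi_exp_neg_sq_lt {z : ℝ} (hz : 0 < z) :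
    ∫ t in Ioi z, exp (-t ^ 2) < exp (-z ^ 2) / (2 * z) := by
  have hint := integrable_exp_neg_sq.integrableOn (s := Ioi z)
  have hint' := (integrable_mul_exp_neg_sq.integrableOn (s := Ioi z)).const_mul z⁻¹
  have hgap : 0 < ∫ t in Ioi z, (z⁻¹ * (t * exp (-t ^ 2)) - exp (-t ^ 2)) := by
    refine setIntegral_Ioi_pos (fun t ht => ?_) (hint'.sub hint)
    have hratio : 1 < z⁻¹ * t := by rwa [inv_mul_eq_div, one_lt_div hz]
    nlinarith [exp_pos (-t ^ 2)]
  rw [integral_sub hint' hint, integral_const_mul, integral_Ioi_mul_exp_neg_sq] at hgap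
  calc ∫ t in Ioi z, exp (-t ^ 2) < z⁻¹ * (exp (-z ^ 2) / 2) := by linarith
    _ = exp (-z ^ 2) / (2 * z) := by field_simp

lemma erfc_eq_integral_Ioi (z : ℝ) : erfc z = 2 / √π * ∫ t in Ioi z, exp (-t ^ 2) := by
  have hhalf : ∫ t in Ioi (0 : ℝ), exp (-t ^ 2) = √π / 2 := by
    simpa using integral_gaussian_Ioi 1
  rw [erfc, erf, ← intervalIntegral.integral_Ioi_sub_Ioi' integrable_exp_neg_sq.integrableOn
    integrable_exp_neg_sq.integrableOn, hhalf]
  field_simp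
  ring

lemma erfc_pos (z : ℝ) : 0 < erfc z := by
  rw [erfc_eq_integral_Ioi]
  exact mul_pos (by positivity)
    (setIntegral_Ioi_pos (fun t _ => exp_pos _) integrable_exp_neg_sq.integrableOn)

lemma hasDerivAt_erfc (z : ℝ) : HasDerivAt erfc (-(2 / √π * exp (-z ^ 2))) z :=
  (((continuous_pow 2).neg.rexp.integral_hasStrictDerivAt 0 z).hasDerivAt.const_mul
    (2 / √π)).const_sub 1

noncomputable def erfcx (z : ℝ) : ℝ := exp (z ^ 2) * erfc z

lemma erfcx_pos (z : ℝ) : 0 < erfcx z := mul_pos (exp_pos _) (erfc_pos z)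

lemma exp_neg_sq_mul_erfcx (z : ℝ) : exp (-z ^ 2) * erfcx z = erfc z := by
  rw [erfcx, ← mul_assoc, ← exp_add, neg_add_cancel, exp_zero, one_mul]

lemma mul_erfcx_lt (z : ℝ) : z * erfcx z < (√π)⁻¹ := by
  rcases le_or_gt z 0 with hz | hz
  · nlinarith [erfcx_pos z, inv_pos.2 (sqrt_pos.2 pi_pos)]
  · have hexp : exp (z ^ 2) * exp (-z ^ 2) = 1 := by rw [← exp_add, add_neg_cancel, exp_zero]
    calc z * erfcx z = z * exp (z ^ 2) * (2 / √π) * ∫ t in Ioi z, exp (-t ^ 2) := by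
          rw [erfcx, erfc_eq_integral_Ioi]; ring
      _ < z * exp (z ^ 2) * (2 / √π) * (exp (-z ^ 2) / (2 * z)) :=
          mul_lt_mul_of_pos_left (integral_Ioi_exp_neg_sq_lt hz) (by positivity)
      _ = (√π)⁻¹ := by field_simp; linear_combination hexp

lemma hasDerivAt_erfcx (z : ℝ) : HasDerivAt erfcx (2 * z * erfcx z - 2 / √π) z := by
  have hexp : exp (z ^ 2) * exp (-z ^ 2) = 1 := by rw [← exp_add, add_neg_cancel, exp_zero]
  refine ((hasDerivAt_pow 2 z).exp.fun_mul (hasDerivAt_erfc z)).congr_deriv ?_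
  rw [erfcx]
  push_cast
  linear_combination (-2 / √π) * hexp

lemma erfcx_strictAnti : StrictAnti erfcx :=
  strictAnti_of_hasDerivAt_neg hasDerivAt_erfcx fun z => by
    have h := mul_erfcx_lt z
    have hdiv : (√π)⁻¹ * 2 = 2 / √π := by ring
    linarith

lemma sign_erfcx_sub_erfcx (u v : ℝ) :
    SignType.sign (erfcx u - erfcx v) = SignType.sign (v - u) := by
  rcases lt_trichotomy u v with h | rfl | h
  · rw [sign_pos (sub_pos.2 (erfcx_strictAnti h)), sign_pos (sub_pos.2 h)]
  · simp
  · rw [sign_neg (sub_neg.2 (erfcx_strictAnti h)), sign_neg (sub_neg.2 h)]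

lemma F_eq_erfcx (a τ : ℝ) :
    F a τ = τ * (erfcx ((τ - a) / √2) - erfcx ((τ + a) / √2)) /
      (erfcx ((τ - a) / √2) + erfcx ((τ + a) / √2)) := by
  set u := (τ - a) / √2
  set v := (τ + a) / √2
  have hsq : 2 * τ * a = v ^ 2 + -u ^ 2 := by
    simp only [u, v, div_pow, sq_sqrt zero_le_two]
    ring
  have hv : exp (2 * τ * a) * erfc v = exp (-u ^ 2) * erfcx v := by
    rw [hsq, exp_add, erfcx]
    ring
  rw [F, hv, ← exp_neg_sq_mul_erfcx u, ← mul_sub, ← mul_add, mul_left_comm,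
    mul_div_mul_left _ _ (exp_pos _).ne']

lemma sign_F (a τ : ℝ) : SignType.sign (F a τ) = SignType.sign (a * τ) := by
  have hden : 0 < erfcx ((τ - a) / √2) + erfcx ((τ + a) / √2) :=
    add_pos (erfcx_pos _) (erfcx_pos _)
  have hgap : (τ + a) / √2 - (τ - a) / √2 = a * √2 := by
    field_simp
    rw [sq_sqrt zero_le_two]
    ring
  rw [F_eq_erfcx, div_eq_mul_inv, sign_mul, sign_pos (inv_pos.2 hden), mul_one, sign_mul,
    sign_erfcx_sub_erfcx, hgap, sign_mul, sign_pos (sqrt_pos.2 two_pos), mul_one, sign_mul,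
    mul_comm]

/-- sign of the expected neighbor feature: for all `a, τ`, the
quantity `F(a, τ)` has the same sign as `a · τ`. -/
theorem expected_neighbor_feature_sign (a τ : ℝ) :
    (0 < a * τ → 0 < F a τ) ∧ (a * τ < 0 → F a τ < 0) ∧ (a * τ = 0 → F a τ = 0) := by
  refine ⟨fun h => ?_, fun h => ?_, fun h => ?_⟩
  · rwa [← sign_eq_one_iff, sign_F, sign_eq_one_iff]
  · rwa [← sign_eq_neg_one_iff, sign_F, sign_eq_neg_one_iff]
  · rwa [← _root_.sign_eq_zero_iff, sign_F, _root_.sign_eq_zero_iff]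
end
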